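/- For F = ℝ or ℂ and m ≤ n ≤ 2m, the m×n×2 tensor X = ((E_m, O); [[O, E_{⌊n/2⌋}],[O, O]]) has tensor rank exactly m + ⌊n/2⌋ over F. -/

import Mathlib

open Matrix BigOperators

/-- A pair of matrices `(A; B)` admits a simultaneous decomposition into `r`
rank-one tensors. -/
def pairDecomp {F : Type*} [Field F] {m n : Type*} [Fintype m] [Fintype n] (r : ℕ)
    (A B : Matrix m n F) : Prop :=
  ∃ (a : Fin r → m → F) (b : Fin r → n → F) (α β : Fin r → F),
    A = ∑ i, α i • Matrix.vecMulVec (a i) (b i) ∧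
    B = ∑ i, β i • Matrix.vecMulVec (a i) (b i)

/-- The tensor rank of the pair of matrices `(A; B)`. -/
noncomputable def pairRank {F : Type*} [Field F] {m n : Type*} [Fintype m] [Fintype n]
    (A B : Matrix m n F) : ℕ :=
  sInf {r | pairDecomp r A B}

/-- The pair `(A; B)` of rectangular matrices is diagonalizable. -/
def pairDiag {F : Type*} [Field F] {m n : ℕ} (A B : Matrix (Fin m) (Fin n) F) : Prop :=
  ∃ (P : (Matrix (Fin m) (Fin m) F)ˣ) (Q : (Matrix (Fin n) (Fin n) F)ˣ),
    (∀ (i : Fin m) (j : Fin n), (i : ℕ) ≠ (j : ℕ) → ((P : Matrix (Fin m) (Fin m) F) * A * (Q : Matrix (Fin n) (Fin n) F)) i j = 0) ∧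
    (∀ (i : Fin m) (j : Fin n), (i : ℕ) ≠ (j : ℕ) → ((P : Matrix (Fin m) (Fin m) F) * B * (Q : Matrix (Fin n) (Fin n) F)) i j = 0)

/-- The nilpotent Jordan block of size `k`. -/
def jordanNil {F : Type*} [Field F] (k : ℕ) : Matrix (Fin k) (Fin k) F :=
  Matrix.of fun i j => if (i : ℕ) + 1 = (j : ℕ) then 1 else 0

/-!
The upper bound writes each of the `m + ⌊n/2⌋` nonzero entries of the pencil as a rank-one term.

For the lower bound, let `C` be the `n × n` corner matrix, so that `A C = B` and `B C = 0`.
Given `A = P diag(α) V` and `B = P diag(β) V` with `r` terms, choose `x` (the field is infinite)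
with `γ = α + x β` nonzero wherever `β` is; then `P Q C = B` and `B = P diag(D) Q` for
`Q = diag(γ) V` and `D = β / γ`. Let `N` project onto the coordinates where `D` vanishes. Then
`Q C = D⁻¹ (D Q C) + N (Q C - D Q)`, the columns of `D Q C` lie in `ker P ∩ ker N` and those of
`N (Q C - D Q)` in `N (ker P)`, whose dimensions add up to `dim ker P = r - rank P`. Hence
`rank B ≤ rank (Q C) ≤ r - rank P ≤ r - rank A`.
-/

section PairRank

variable {F : Type*} [Field F]

theorem Submodule.finrank_inf_ker_add_finrank_map {V W : Type*} [AddCommGroup V] [Module F V]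
    [FiniteDimensional F V] [AddCommGroup W] [Module F W] (K : Submodule F V) (f : V →ₗ[F] W) :
    Module.finrank F ↥(K ⊓ LinearMap.ker f) + Module.finrank F ↥(K.map f) =
      Module.finrank F K := by
  rw [← (f.domRestrict K).finrank_range_add_finrank_ker, LinearMap.range_domRestrict,
    LinearMap.ker_domRestrict, ← Submodule.finrank_map_subtype_eq, Submodule.map_comap_subtype,
    add_comm]

namespace Matrix

theorem rank_add_le {m n : Type*} [Fintype n] (A B : Matrix m n F) :
    (A + B).rank ≤ A.rank + B.rank := by
  unfold rank
  rw [mulVecLin_add]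
  exact (Submodule.finrank_mono (LinearMap.range_add_le _ _)).trans
    (Submodule.finrank_add_le_finrank_add_finrank _ _)

theorem sum_smul_vecMulVec_eq_mul_diagonal_mul {m n ι : Type*} [Fintype ι] [DecidableEq ι]
    (a : ι → m → F) (b : ι → n → F) (c : ι → F) :
    ∑ i, c i • vecMulVec (a i) (b i) = (of a)ᵀ * diagonal c * of b := by
  ext p q
  simp [sum_apply, vecMulVec_apply, Matrix.mul_apply, diagonal, mul_comm, mul_left_comm]

theorem rank_mul_diagonal_mul_add_rank_le {m n ι : Type*} [Fintype n] [Fintype ι]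
    [DecidableEq ι] (P : Matrix m ι F) (Q : Matrix ι n F) (D : ι → F) (C : Matrix n n F)
    (hC : P * Q * C = P * diagonal D * Q) (hC2 : P * diagonal D * Q * C = 0) :
    (P * diagonal D * Q).rank + P.rank ≤ Fintype.card ι := by
  classical
  set N : Matrix ι ι F := diagonal fun i => if D i = 0 then 1 else 0
  set K := LinearMap.ker P.mulVecLin
  set M₁ := diagonal D * Q * C
  set M₂ := N * (Q * C - diagonal D * Q)
  have hND : N * diagonal D = 0 := by
    rw [diagonal_mul_diagonal, ← diagonal_zero]
    congr 1; funext i; by_cases h : D i = 0 <;> simp [h]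
  have hrankP : P.rank + Module.finrank F K = Fintype.card ι := by
    have := P.mulVecLin.finrank_range_add_finrank_ker
    rwa [Module.finrank_fintype_fun_eq_card] at this
  have hM₁ : M₁.rank ≤ Module.finrank F ↥(K ⊓ LinearMap.ker N.mulVecLin) := by
    refine Submodule.finrank_mono ?_
    rintro _ ⟨v, rfl⟩
    refine ⟨?_, ?_⟩
    · simp [K, M₁, mulVec_mulVec, ← Matrix.mul_assoc, hC2]
    · simp [M₁, mulVec_mulVec, ← Matrix.mul_assoc, hND]
  have hM₂ : M₂.rank ≤ Module.finrank F ↥(K.map N.mulVecLin) := by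
    refine Submodule.finrank_mono ?_
    rintro _ ⟨v, rfl⟩
    refine ⟨(Q * C - diagonal D * Q) *ᵥ v, ?_, mulVec_mulVec _ _ _⟩
    simp [K, mulVec_mulVec, Matrix.mul_sub, ← Matrix.mul_assoc, hC]
  have hsplit : Q * C = diagonal D⁻¹ * M₁ + M₂ := by
    ext i j
    by_cases h : D i = 0 <;> simp [M₁, M₂, N, diagonal, Matrix.mul_apply, h, Matrix.mul_assoc]
  have hK := K.finrank_inf_ker_add_finrank_map N.mulVecLin
  calc (P * diagonal D * Q).rank + P.rank
      = (P * (Q * C)).rank + P.rank := by rw [← Matrix.mul_assoc, hC]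
    _ ≤ (Q * C).rank + P.rank := by gcongr; exact rank_mul_le_right _ _
    _ ≤ M₁.rank + M₂.rank + P.rank := by
        gcongr
        rw [hsplit]
        exact (rank_add_le _ _).trans (by gcongr; exact rank_mul_le_right _ _)
    _ ≤ Fintype.card ι := by omega

end Matrix

theorem exists_add_mul_ne_zero {ι : Type*} [Fintype ι] [Infinite F] (α β : ι → F) :
    ∃ x : F, ∀ i, β i ≠ 0 → α i + x * β i ≠ 0 := by
  classical
  obtain ⟨x, hx⟩ := Infinite.exists_notMem_finset (Finset.univ.image fun i => -(α i / β i))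
  refine ⟨x, fun i hβ hx0 => hx (Finset.mem_image.mpr ⟨i, Finset.mem_univ i, ?_⟩)⟩
  field_simp
  linear_combination -hx0

theorem pairDecomp.add {m n : Type*} [Fintype m] [Fintype n] {r s : ℕ}
    {A B A' B' : Matrix m n F} (h : pairDecomp r A B) (h' : pairDecomp s A' B') :
    pairDecomp (r + s) (A + A') (B + B') := by
  obtain ⟨a, b, α, β, rfl, rfl⟩ := h
  obtain ⟨a', b', α', β', rfl, rfl⟩ := h'
  exact ⟨Fin.append a a', Fin.append b b', Fin.append α α', Fin.append β β',
    by simp [Fin.sum_univ_add], by simp [Fin.sum_univ_add]⟩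

theorem pairRank_le {m n : Type*} [Fintype m] [Fintype n] {r : ℕ} {A B : Matrix m n F}
    (h : pairDecomp r A B) : pairRank A B ≤ r :=
  Nat.sInf_le h

theorem pairDecomp_pairRank {m n : Type*} [Fintype m] [Fintype n] {r : ℕ}
    {A B : Matrix m n F} (h : pairDecomp r A B) : pairDecomp (pairRank A B) A B :=
  Nat.sInf_mem (s := {r | pairDecomp r A B}) ⟨r, h⟩

theorem pairDecomp.rank_add_rank_le [Infinite F] {m n : Type*} [Fintype m] [Fintype n]
    {A B : Matrix m n F} {C : Matrix n n F} (hAC : A * C = B) (hBC : B * C = 0) {r : ℕ}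
    (h : pairDecomp r A B) : A.rank + B.rank ≤ r := by
  obtain ⟨a, b, α, β, hA, hB⟩ := h
  rw [sum_smul_vecMulVec_eq_mul_diagonal_mul] at hA hB
  set P := (of a)ᵀ
  set V := of b
  obtain ⟨x, hx⟩ := exists_add_mul_ne_zero α β
  set γ := α + x • β
  have hDγ : diagonal (β / γ) * diagonal γ = diagonal β := by
    rw [diagonal_mul_diagonal]
    congr 1; funext i
    by_cases hβ : β i = 0
    · simp [hβ]
    · exact div_mul_cancel₀ _ (hx i hβ)
  have hB' : P * diagonal (β / γ) * (diagonal γ * V) = B := by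
    rw [hB, Matrix.mul_assoc P, ← Matrix.mul_assoc _ _ V, hDγ, Matrix.mul_assoc]
  have hG : P * (diagonal γ * V) = A + x • B := by
    have hγ : diagonal γ = diagonal α + x • diagonal β := by
      rw [← diagonal_smul, diagonal_add]; rfl
    rw [hγ, hA, hB, Matrix.add_mul, Matrix.mul_add, Matrix.smul_mul, Matrix.mul_smul,
      Matrix.mul_assoc, Matrix.mul_assoc]
  have hrank := rank_mul_diagonal_mul_add_rank_le P (diagonal γ * V) (β / γ) C
    (by rw [hB', hG, Matrix.add_mul, hAC, Matrix.smul_mul, hBC, smul_zero, add_zero])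
    (by rw [hB', hBC])
  have hA_le : A.rank ≤ P.rank := hA ▸ (rank_mul_le_left _ _).trans (rank_mul_le_left _ _)
  rw [hB', Fintype.card_fin] at hrank
  omega

def rectId (F : Type*) [Zero F] [One F] (m n : ℕ) : Matrix (Fin m) (Fin n) F :=
  of fun i j => if (i : ℕ) = j then 1 else 0

def cornerId (F : Type*) [Zero F] [One F] (m n : ℕ) : Matrix (Fin m) (Fin n) F :=
  of fun i j => if (i : ℕ) < n / 2 ∧ (j : ℕ) = i + (n - n / 2) then 1 else 0

section Example

variable {m n : ℕ}

theorem rectId_mul_rectId (hm : m ≤ n) : rectId F m n * rectId F n m = 1 := by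
  ext i j
  rw [Matrix.mul_apply, Fintype.sum_eq_single (Fin.castLE hm i)]
  · simp [rectId, one_apply, Fin.ext_iff]
  · intro k hk
    simp only [rectId, of_apply, ite_mul, one_mul, zero_mul, ite_eq_right_iff]
    exact fun h => absurd (Fin.ext h.symm) hk

theorem rectId_mul_cornerId (hm : m ≤ n) : rectId F m n * cornerId F n n = cornerId F m n := by
  ext i j
  rw [Matrix.mul_apply, Fintype.sum_eq_single (Fin.castLE hm i)]
  · simp [rectId, cornerId]
  · intro k hk
    simp only [rectId, of_apply, ite_mul, one_mul, zero_mul, ite_eq_right_iff]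
    exact fun h => absurd (Fin.ext h.symm) hk

theorem cornerId_mul_cornerId : cornerId F m n * cornerId F n n = 0 := by
  ext i j
  rw [Matrix.mul_apply]
  refine Finset.sum_eq_zero fun k _ => ?_
  simp only [cornerId, of_apply, ite_mul, one_mul, zero_mul, ite_eq_right_iff]
  omega

theorem cornerId_mul_transpose :
    cornerId F m n * (cornerId F m n)ᵀ =
      diagonal fun i : Fin m => if (i : ℕ) < n / 2 then 1 else 0 := by
  ext i j
  rw [Matrix.mul_apply]
  by_cases hi : (i : ℕ) < n / 2
  · rw [Fintype.sum_eq_single ⟨i + (n - n / 2), by omega⟩]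
    · simp [cornerId, diagonal, hi, Fin.ext_iff]
      split_ifs <;> first | rfl | omega
    · intro k hk
      simp only [cornerId, transpose_apply, of_apply, ite_mul, one_mul, zero_mul,
        ite_eq_right_iff]
      exact fun h => absurd (Fin.ext h.2) hk
  · simp [cornerId, diagonal, hi]

theorem le_rank_rectId (hm : m ≤ n) : m ≤ (rectId F m n).rank :=
  calc m = (1 : Matrix (Fin m) (Fin m) F).rank := by rw [rank_one, Fintype.card_fin]
    _ = (rectId F m n * rectId F n m).rank := by rw [rectId_mul_rectId hm]
    _ ≤ (rectId F m n).rank := rank_mul_le_left _ _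

theorem le_rank_cornerId (hn : n ≤ 2 * m) : n / 2 ≤ (cornerId F m n).rank := by
  classical
  calc n / 2 = (diagonal fun i : Fin m => if (i : ℕ) < n / 2 then (1 : F) else 0).rank := by
        rw [rank_diagonal, Fintype.card_subtype]
        simp [Fin.card_filter_val_lt]
        omega
    _ = (cornerId F m n * (cornerId F m n)ᵀ).rank := by rw [cornerId_mul_transpose]
    _ ≤ (cornerId F m n).rank := rank_mul_le_left _ _

theorem pairDecomp_rectId_zero (hm : m ≤ n) : pairDecomp m (rectId F m n) 0 := by
  refine ⟨fun k => Pi.single k 1, fun k => Pi.single (Fin.castLE hm k) 1, 1, 0, ?_, by simp⟩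
  ext i j
  simp only [rectId, of_apply, Matrix.sum_apply, Pi.one_apply, one_smul, vecMulVec_apply,
    Pi.single_apply, mul_ite, mul_one, mul_zero]
  rw [Fintype.sum_eq_single i fun k hk => by simp [Ne.symm hk]]
  simp [Fin.ext_iff, eq_comm]

theorem pairDecomp_zero_cornerId (hn : n ≤ 2 * m) : pairDecomp (n / 2) 0 (cornerId F m n) := by
  refine ⟨fun p => Pi.single (Fin.castLE (by omega) p) 1,
    fun p => Pi.single ⟨p + (n - n / 2), by omega⟩ 1, 0, 1, by simp, ?_⟩
  ext i j
  simp only [cornerId, of_apply, Matrix.sum_apply, Pi.one_apply, one_smul, vecMulVec_apply,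
    Pi.single_apply, Fin.ext_iff, Fin.val_castLE]
  by_cases hi : (i : ℕ) < n / 2
  · rw [Fintype.sum_eq_single ⟨i, hi⟩ fun p hp => by
      rw [if_neg fun h => hp (Fin.ext h.symm), zero_mul]]
    simp [hi]
  · rw [if_neg fun h => hi h.1]
    refine (Finset.sum_eq_zero fun p _ => ?_).symm
    rw [if_neg fun h : (i : ℕ) = p => hi (h ▸ p.2), zero_mul]

end Example

end PairRank

/-- The `m×n×2` tensor `((E_m, O); [[O, E_{⌊n/2⌋}], [O, O]])` has rank `m + ⌊n/2⌋`. -/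
theorem pairRank_example_max {F : Type*} [RCLike F] {m n : ℕ} (hm : m ≤ n) (hn : n ≤ 2 * m) :
    pairRank
      (Matrix.of fun (i : Fin m) (j : Fin n) => if (i : ℕ) = (j : ℕ) then (1 : F) else 0)
      (Matrix.of fun (i : Fin m) (j : Fin n) =>
        if (i : ℕ) < n / 2 ∧ (j : ℕ) = (i : ℕ) + (n - n / 2) then (1 : F) else 0) =
      m + n / 2 := by
  have hdecomp : pairDecomp (m + n / 2) (rectId F m n) (cornerId F m n) := by
    simpa using (pairDecomp_rectId_zero (F := F) hm).add (pairDecomp_zero_cornerId hn)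
  refine le_antisymm (pairRank_le hdecomp) ?_
  calc m + n / 2 ≤ (rectId F m n).rank + (cornerId F m n).rank :=
        add_le_add (le_rank_rectId hm) (le_rank_cornerId hn)
    _ ≤ _ := (pairDecomp_pairRank hdecomp).rank_add_rank_le (rectId_mul_cornerId hm)
        cornerId_mul_cornerId
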